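/- Every Λ_p-regular cell in ℝⁿ is quasi-convex; moreover, each of the functions ψ_i appearing in the definition of an open Λ_p-regular cell (when finite), and the map φ appearing in the definition of a lower-dimensional Λ_p-regular cell, is Lipschitz. -/

import Mathlib

open scoped BigOperators NNReal

open Classical in
/-- Distance to a set, with the convention `d(x, ∅) = 1`. -/
noncomputable def d1 {X : Type*} [PseudoMetricSpace X] (x : X) (S : Set X) : ℝ :=
  if S.Nonempty then Metric.infDist x S else 1

/-- First-order partial derivative in direction `i`. -/
noncomputable def pd {k : ℕ} {F : Type*} [NormedAddCommGroup F] [NormedSpace ℝ F]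
    (i : Fin k) (f : (Fin k → ℝ) → F) : (Fin k → ℝ) → F :=
  fun x => fderiv ℝ f x (Pi.single i 1)

/-- Iterated partial derivative `D^α` for a multi-index `α`. -/
noncomputable def mD {k : ℕ} {F : Type*} [NormedAddCommGroup F] [NormedSpace ℝ F]
    (α : Fin k → ℕ) (f : (Fin k → ℝ) → F) : (Fin k → ℝ) → F :=
  (List.finRange k).foldr (fun i g => (pd i)^[α i] g) f

/-- `|α| = α₁ + ⋯ + α_k`. -/
def deg {k : ℕ} (α : Fin k → ℕ) : ℕ := ∑ i, α i

/-- `α! = α₁! ⋯ α_k!`. -/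
def mfact {k : ℕ} (α : Fin k → ℕ) : ℕ := ∏ i, Nat.factorial (α i)

/-- `A` is quasi-convex with constant `M`: any two points of `A` are joined by a
rectifiable arc in `A` of length (total variation) at most `M` times their distance. -/
def QuasiConvexWith {X : Type*} [PseudoMetricSpace X] (M : ℝ) (A : Set X) : Prop :=
  ∀ a ∈ A, ∀ b ∈ A, ∃ γ : ℝ → X,
    ContinuousOn γ (Set.Icc 0 1) ∧ γ 0 = a ∧ γ 1 = b ∧
    (∀ t ∈ Set.Icc (0 : ℝ) 1, γ t ∈ A) ∧
    eVariationOn γ (Set.Icc 0 1) ≤ ENNReal.ofReal (M * dist a b)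

/-- A map `f : Ω → F` on an open `Ω ⊆ ℝ^k` is `Λ_p`-regular if it is of class `C^p` and
`|D^α f(x)| ≤ C / d(x, ∂Ω)^(|α|-1)` for `1 ≤ |α| ≤ p`, with the convention `d(x, ∅) = 1`. -/
def LambdaRegular (p : ℕ) {k : ℕ} {F : Type*} [NormedAddCommGroup F] [NormedSpace ℝ F]
    (Ω : Set (Fin k → ℝ)) (f : (Fin k → ℝ) → F) : Prop :=
  ContDiffOn ℝ (p : ℕ∞) f Ω ∧
  ∃ C > 0, ∀ x ∈ Ω, ∀ α : Fin k → ℕ, 1 ≤ deg α → deg α ≤ p →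
    ‖mD α f x‖ ≤ C / d1 x (frontier Ω) ^ (deg α - 1)

/-- Open `Λ_p`-regular cells in `ℝⁿ`, by induction on `n`: an open interval when `n = 1`;
for `n + 1`, the set between two `Λ_p`-regular (or infinite) functions over an open
`Λ_p`-regular cell `T ⊆ ℝⁿ`. (`ℝ⁰` itself is the open cell in dimension `0`.) -/
inductive IsOpenCell (p : ℕ) : (n : ℕ) → Set (Fin n → ℝ) → Prop
  | base0 : IsOpenCell p 0 Set.univ
  | base (a b : EReal) (hab : a < b) :
      IsOpenCell p 1 {x : Fin 1 → ℝ | a < (x 0 : EReal) ∧ (x 0 : EReal) < b}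
  | step {n : ℕ} (hn : 1 ≤ n) (T : Set (Fin n → ℝ)) (ψ₁ ψ₂ : (Fin n → ℝ) → EReal)
      (hT : IsOpenCell p n T)
      (h₁ : (∀ x ∈ T, ψ₁ x = ⊥) ∨
        ∃ g : (Fin n → ℝ) → ℝ, LambdaRegular p T g ∧ ∀ x ∈ T, ψ₁ x = (g x : EReal))
      (h₂ : (∀ x ∈ T, ψ₂ x = ⊤) ∨
        ∃ g : (Fin n → ℝ) → ℝ, LambdaRegular p T g ∧ ∀ x ∈ T, ψ₂ x = (g x : EReal))
      (hlt : ∀ x ∈ T, ψ₁ x < ψ₂ x) :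
      IsOpenCell p (n + 1) {x : Fin (n + 1) → ℝ | (x ∘ Fin.castSucc) ∈ T ∧
        ψ₁ (x ∘ Fin.castSucc) < ((x (Fin.last n) : ℝ) : EReal) ∧
        ((x (Fin.last n) : ℝ) : EReal) < ψ₂ (x ∘ Fin.castSucc)}

/-- An `m`-dimensional `Λ_p`-regular cell in `ℝⁿ`: either an open `Λ_p`-regular cell
(`m = n`), or, for `m < n`, the graph of a `Λ_p`-regular map `φ : T → ℝ^(n-m)` over an
open `Λ_p`-regular cell `T ⊆ ℝ^m`. -/
def IsCell (p n m : ℕ) (S : Set (Fin n → ℝ)) : Prop :=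
  (m = n ∧ IsOpenCell p n S) ∨
  ∃ (hmn : m < n) (T : Set (Fin m → ℝ)) (φ : (Fin m → ℝ) → (Fin (n - m) → ℝ)),
    IsOpenCell p m T ∧ LambdaRegular p T φ ∧
    S = {x : Fin n → ℝ | (fun i : Fin m => x (Fin.castLE hmn.le i)) ∈ T ∧
      ∀ j : Fin (n - m), x ⟨m + j.1, by have := j.isLt; omega⟩ =
        φ (fun i : Fin m => x (Fin.castLE hmn.le i)) j}

section Helpers

open Set Metric ENNReal

/-- Variation bound for "Lipschitz in time" paths on `[0,1]`. -/
lemma evar_le_of_dist_le {X : Type*} [PseudoMetricSpace X] {γ : ℝ → X} {c : ℝ}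
    (hc : 0 ≤ c)
    (h : ∀ s ∈ Icc (0:ℝ) 1, ∀ t ∈ Icc (0:ℝ) 1, s ≤ t → dist (γ s) (γ t) ≤ c * (t - s)) :
    eVariationOn γ (Icc 0 1) ≤ ENNReal.ofReal c := by
  apply iSup_le
  rintro ⟨n, u, hu, us⟩
  have key : ∀ i, edist (γ (u (i+1))) (γ (u i)) ≤ ENNReal.ofReal (c * (u (i+1) - u i)) := by
    intro i
    rw [edist_dist, dist_comm]
    exact ENNReal.ofReal_le_ofReal (h _ (us i) _ (us (i+1)) (hu (Nat.le_succ i)))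
  calc ∑ i ∈ Finset.range n, edist (γ (u (i+1))) (γ (u i))
      ≤ ∑ i ∈ Finset.range n, ENNReal.ofReal (c * (u (i+1) - u i)) :=
        Finset.sum_le_sum fun i _ => key i
    _ = ENNReal.ofReal (∑ i ∈ Finset.range n, c * (u (i+1) - u i)) := by
        rw [ENNReal.ofReal_sum_of_nonneg]
        intro i _
        have := hu (Nat.le_succ i)
        nlinarith [this]
    _ ≤ ENNReal.ofReal c := by
        apply ENNReal.ofReal_le_ofReal
        rw [← Finset.mul_sum, Finset.sum_range_sub (fun i => u i)]
        have h0 := us 0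
        have hn := us n
        simp only [Set.mem_Icc] at h0 hn
        nlinarith [h0.1, hn.2]

/-- Comparison lemma for variations. -/
lemma evar_le_comb {X Y Z : Type*} [PseudoEMetricSpace X] [PseudoEMetricSpace Y]
    [PseudoEMetricSpace Z] {f : ℝ → X} {g : ℝ → Y} {h : ℝ → Z} {s : Set ℝ}
    {c₁ c₂ : ℝ≥0∞}
    (H : ∀ x ∈ s, ∀ y ∈ s, edist (f x) (f y) ≤ c₁ * edist (g x) (g y) + c₂ * edist (h x) (h y)) :
    eVariationOn f s ≤ c₁ * eVariationOn g s + c₂ * eVariationOn h s := by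
  apply iSup_le
  rintro ⟨n, u, hu, us⟩
  calc ∑ i ∈ Finset.range n, edist (f (u (i+1))) (f (u i))
      ≤ ∑ i ∈ Finset.range n,
          (c₁ * edist (g (u (i+1))) (g (u i)) + c₂ * edist (h (u (i+1))) (h (u i))) :=
        Finset.sum_le_sum fun i _ => H _ (us (i+1)) _ (us i)
    _ = c₁ * ∑ i ∈ Finset.range n, edist (g (u (i+1))) (g (u i))
        + c₂ * ∑ i ∈ Finset.range n, edist (h (u (i+1))) (h (u i)) := by
        rw [Finset.sum_add_distrib, Finset.mul_sum, Finset.mul_sum]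
    _ ≤ c₁ * eVariationOn g s + c₂ * eVariationOn h s := by
        gcongr
        · exact eVariationOn.sum_le hu us
        · exact eVariationOn.sum_le hu us

end Helpers
section Deriv

open Set Metric ENNReal

variable {k : ℕ} {F : Type*} [NormedAddCommGroup F] [NormedSpace ℝ F]

private lemma foldr_single_aux (f : (Fin k → ℝ) → F) (i : Fin k) :
    ∀ l : List (Fin k), l.Nodup →
      ((i ∉ l → l.foldr (fun j g => (pd j)^[(Pi.single i 1 : Fin k → ℕ) j] g) f = f) ∧
       (i ∈ l → l.foldr (fun j g => (pd j)^[(Pi.single i 1 : Fin k → ℕ) j] g) f = pd i f)) := by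
  intro l
  induction l with
  | nil => simp
  | cons j t ih =>
    intro hnd
    rw [List.nodup_cons] at hnd
    obtain ⟨hjt, hndt⟩ := hnd
    have iht := ih hndt
    constructor
    · intro hni
      simp only [List.mem_cons, not_or] at hni
      have hji : j ≠ i := fun h => hni.1 h.symm
      have hj0 : (Pi.single i 1 : Fin k → ℕ) j = 0 := by simp [Pi.single_apply, hji]
      rw [List.foldr_cons, hj0, Function.iterate_zero, id_eq]
      exact iht.1 hni.2
    · intro hmem
      rcases List.mem_cons.1 hmem with h | h
      · subst h
        have hj1 : (Pi.single i 1 : Fin k → ℕ) i = 1 := by simp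
        rw [List.foldr_cons, hj1, Function.iterate_one, iht.1 hjt]
      · have hji : j ≠ i := fun hji => hjt (hji ▸ h)
        have hj0 : (Pi.single i 1 : Fin k → ℕ) j = 0 := by simp [Pi.single_apply, hji]
        rw [List.foldr_cons, hj0, Function.iterate_zero, id_eq]
        exact iht.2 h

lemma mD_single (i : Fin k) (f : (Fin k → ℝ) → F) : mD (Pi.single i 1) f = pd i f := by
  unfold mD
  exact (foldr_single_aux f i (List.finRange k) (List.nodup_finRange k)).2 (List.mem_finRange i)

lemma deg_single (i : Fin k) : deg (Pi.single i (1:ℕ)) = 1 := by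
  unfold deg
  rw [Finset.sum_pi_single' i 1]
  simp

/-- First-derivative bound for a `Λ_p`-regular function. -/
lemma lambda_fderiv_bound {p : ℕ} (hp : 1 ≤ p) {U : Set (Fin k → ℝ)}
    {f : (Fin k → ℝ) → F} (hf : LambdaRegular p U f) :
    ∃ C : ℝ, 0 ≤ C ∧ ∀ x ∈ U, ‖fderiv ℝ f x‖ ≤ C := by
  obtain ⟨-, C, hC, hb⟩ := hf
  refine ⟨k * C, by positivity, fun x hx => ?_⟩
  have hcoord : ∀ i : Fin k, ‖fderiv ℝ f x (Pi.single i 1)‖ ≤ C := by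
    intro i
    have := hb x hx (Pi.single i 1) (by rw [deg_single]) (by rw [deg_single]; exact hp)
    rwa [mD_single, deg_single, Nat.sub_self, pow_zero, div_one] at this
    -- note: `pd i f x = fderiv ℝ f x (Pi.single i 1)` definitionally
  apply ContinuousLinearMap.opNorm_le_bound _ (by positivity)
  intro v
  have hv : v = ∑ i : Fin k, v i • (Pi.single i 1 : Fin k → ℝ) := by
    have := pi_eq_sum_univ v
    convert this using 2 with i
    funext j
    simp [Pi.single_apply, eq_comm]
  calc ‖fderiv ℝ f x v‖ = ‖∑ i : Fin k, v i • fderiv ℝ f x (Pi.single i 1)‖ := by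
        conv_lhs => rw [hv]
        rw [map_sum]
        congr 1
        exact Finset.sum_congr rfl fun i _ => by rw [(fderiv ℝ f x).map_smul]
    _ ≤ ∑ i : Fin k, ‖v i • fderiv ℝ f x (Pi.single i 1)‖ := norm_sum_le _ _
    _ ≤ ∑ i : Fin k, ‖v‖ * C := by
        apply Finset.sum_le_sum
        intro i _
        rw [norm_smul]
        exact mul_le_mul (norm_le_pi_norm v i) (hcoord i) (norm_nonneg _) (norm_nonneg _)
    _ = k * C * ‖v‖ := by
        rw [Finset.sum_const, Finset.card_univ, Fintype.card_fin, nsmul_eq_mul]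
        ring

end Deriv
section Path

open Set Metric ENNReal

variable {k : ℕ} {F : Type*} [NormedAddCommGroup F] [NormedSpace ℝ F]

/-- Along a rectifiable path in an open set where `‖f'‖ ≤ C`, values of `f` move at most
`C` times the variation. -/
lemma dist_image_le_of_path {U : Set (Fin k → ℝ)} (hU : IsOpen U)
    {f : (Fin k → ℝ) → F} (hdiff : ∀ x ∈ U, DifferentiableAt ℝ f x)
    {C : ℝ} (hC : 0 ≤ C) (hbound : ∀ x ∈ U, ‖fderiv ℝ f x‖ ≤ C)
    {γ : ℝ → Fin k → ℝ} (hγ : ContinuousOn γ (Icc 0 1))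
    (hmem : ∀ t ∈ Icc (0:ℝ) 1, γ t ∈ U)
    {V : ℝ} (hV : 0 ≤ V) (hvar : eVariationOn γ (Icc 0 1) ≤ ENNReal.ofReal V) :
    dist (f (γ 0)) (f (γ 1)) ≤ C * V := by
  have hKc : IsCompact (γ '' Icc 0 1) := (isCompact_Icc).image_of_continuousOn hγ
  have hKU : γ '' Icc 0 1 ⊆ U := by rintro _ ⟨t, ht, rfl⟩; exact hmem t ht
  obtain ⟨δ, hδ, hthick⟩ := hKc.exists_thickening_subset_open hU hKU
  have hball : ∀ t ∈ Icc (0:ℝ) 1, ball (γ t) δ ⊆ U := fun t ht =>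
    (Metric.ball_subset_thickening (mem_image_of_mem γ ht) δ).trans hthick
  have hunif := (isCompact_Icc.uniformContinuousOn_of_continuous hγ)
  rw [Metric.uniformContinuousOn_iff] at hunif
  obtain ⟨η, hη, hmod⟩ := hunif δ hδ
  obtain ⟨N₀, hN₀⟩ := exists_nat_one_div_lt hη
  set N : ℕ := N₀ + 1 with hN
  have hNpos : (0:ℝ) < N := by positivity
  set u : ℕ → ℝ := fun i => min ((i : ℝ) / N) 1 with hu
  have humono : Monotone u := by
    intro i j hij
    exact min_le_min (by gcongr <;> exact_mod_cast hij) le_rfl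
  have humem : ∀ i, u i ∈ Icc (0:ℝ) 1 :=
    fun i => ⟨le_min (by positivity) zero_le_one, min_le_right _ _⟩
  have hu0 : u 0 = 0 := by simp [hu]
  have huN : u N = 1 := by
    simp only [hu]
    rw [div_self (ne_of_gt hNpos)]
    simp
  have hstep : ∀ i : ℕ, u (i+1) - u i ≤ 1 / N := by
    intro i
    have hbval : u (i+1) = min (((i:ℝ)+1)/N) 1 := by
      simp only [hu]; push_cast; ring_nf
    rcases le_total ((i:ℝ)/N) 1 with h | h
    · have h1 : u i = (i:ℝ)/N := min_eq_left h
      have h2 : u (i+1) ≤ ((i:ℝ)+1)/N := by rw [hbval]; exact min_le_left _ _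
      rw [h1]
      have : ((i:ℝ)+1)/N - (i:ℝ)/N = 1/N := by ring
      linarith
    · have h1 : u i = 1 := min_eq_right h
      have h2 : u (i+1) ≤ 1 := min_le_right _ _
      have : (0:ℝ) ≤ 1/N := by positivity
      rw [h1]; linarith
  have hseg : ∀ i : ℕ, dist (f (γ (u i))) (f (γ (u (i+1)))) ≤ C * dist (γ (u i)) (γ (u (i+1))) := by
    intro i
    have hd : dist (u i) (u (i+1)) < η := by
      rw [Real.dist_eq, abs_sub_comm, abs_of_nonneg (by linarith [humono (Nat.le_succ i)] : (0:ℝ) ≤ u (i+1) - u i)]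
      calc u (i+1) - u i ≤ 1/N := hstep i
        _ = 1/((N₀:ℝ)+1) := by rw [hN]; push_cast; ring
        _ < η := hN₀
    have hy : γ (u (i+1)) ∈ ball (γ (u i)) δ := by
      rw [mem_ball, dist_comm]
      exact hmod _ (humem i) _ (humem (i+1)) hd
    have key := Convex.norm_image_sub_le_of_norm_fderiv_le
      (fun z hz => hdiff z (hball _ (humem i) hz))
      (fun z hz => hbound z (hball _ (humem i) hz))
      (convex_ball _ _) (mem_ball_self hδ) hy
    calc dist (f (γ (u i))) (f (γ (u (i+1))))
        = ‖f (γ (u (i+1))) - f (γ (u i))‖ := by rw [dist_eq_norm, norm_sub_rev]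
      _ ≤ C * ‖γ (u (i+1)) - γ (u i)‖ := key
      _ = C * dist (γ (u i)) (γ (u (i+1))) := by rw [dist_eq_norm, norm_sub_rev]
  have hsum : ∑ i ∈ Finset.range N, dist (γ (u i)) (γ (u (i+1))) ≤ V := by
    have h1 : ENNReal.ofReal (∑ i ∈ Finset.range N, dist (γ (u i)) (γ (u (i+1))))
        ≤ ENNReal.ofReal V := by
      rw [ENNReal.ofReal_sum_of_nonneg (fun i _ => dist_nonneg)]
      calc ∑ i ∈ Finset.range N, ENNReal.ofReal (dist (γ (u i)) (γ (u (i+1))))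
          = ∑ i ∈ Finset.range N, edist (γ (u (i+1))) (γ (u i)) := by
            refine Finset.sum_congr rfl fun i _ => ?_
            rw [edist_dist, dist_comm]
        _ ≤ eVariationOn γ (Icc 0 1) := eVariationOn.sum_le humono (fun i => humem i)
        _ ≤ ENNReal.ofReal V := hvar
    exact (ENNReal.ofReal_le_ofReal_iff hV).1 h1
  calc dist (f (γ 0)) (f (γ 1)) = dist ((f ∘ γ ∘ u) 0) ((f ∘ γ ∘ u) N) := by
        simp only [Function.comp_apply, hu0, huN]
    _ ≤ ∑ i ∈ Finset.range N, dist ((f ∘ γ ∘ u) i) ((f ∘ γ ∘ u) (i+1)) :=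
        dist_le_range_sum_dist _ N
    _ ≤ ∑ i ∈ Finset.range N, C * dist (γ (u i)) (γ (u (i+1))) :=
        Finset.sum_le_sum fun i _ => hseg i
    _ = C * ∑ i ∈ Finset.range N, dist (γ (u i)) (γ (u (i+1))) := by rw [Finset.mul_sum]
    _ ≤ C * V := mul_le_mul_of_nonneg_left hsum hC

/-- A `Λ_p`-regular map on an open quasi-convex set is Lipschitz (real-constant form). -/
lemma lambda_lipschitz_real {p : ℕ} (hp : 1 ≤ p) {U : Set (Fin k → ℝ)} (hU : IsOpen U)
    {M : ℝ} (hM : 0 < M) (hq : QuasiConvexWith M U)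
    {f : (Fin k → ℝ) → F} (hf : LambdaRegular p U f) :
    ∃ K : ℝ, 0 ≤ K ∧ ∀ a ∈ U, ∀ b ∈ U, dist (f a) (f b) ≤ K * dist a b := by
  obtain ⟨C, hC, hbound⟩ := lambda_fderiv_bound hp hf
  have hdiff : ∀ x ∈ U, DifferentiableAt ℝ f x := by
    intro x hx
    have h1 : ContDiffAt ℝ (p : ℕ∞) f x := hf.1.contDiffAt (hU.mem_nhds hx)
    exact h1.differentiableAt (by exact_mod_cast (show p ≠ 0 by omega))
  refine ⟨C * M, by positivity, fun a ha b hb => ?_⟩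
  obtain ⟨γ, hγc, hγ0, hγ1, hγmem, hγvar⟩ := hq a ha b hb
  have := dist_image_le_of_path hU hdiff hC hbound hγc hγmem
    (V := M * dist a b) (by positivity) hγvar
  rw [hγ0, hγ1] at this
  calc dist (f a) (f b) ≤ C * (M * dist a b) := this
    _ = C * M * dist a b := by ring

/-- `Λ_p`-regular maps on open quasi-convex sets are Lipschitz. -/
lemma lambda_lipschitzOnWith {p : ℕ} (hp : 1 ≤ p) {U : Set (Fin k → ℝ)} (hU : IsOpen U)
    {M : ℝ} (hM : 0 < M) (hq : QuasiConvexWith M U)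
    {f : (Fin k → ℝ) → F} (hf : LambdaRegular p U f) :
    ∃ K : ℝ≥0, LipschitzOnWith K f U := by
  obtain ⟨K, hK, h⟩ := lambda_lipschitz_real hp hU hM hq hf
  refine ⟨K.toNNReal, LipschitzOnWith.of_dist_le_mul fun a ha b hb => ?_⟩
  rw [Real.coe_toNNReal K hK]
  exact h a ha b hb

/-- Convex sets are quasi-convex with constant 1. -/
lemma Convex.quasiConvexWith {E' : Type*} [NormedAddCommGroup E'] [NormedSpace ℝ E']
    {A : Set E'} (hA : Convex ℝ A) : QuasiConvexWith 1 A := by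
  intro a ha b hb
  refine ⟨fun t => a + t • (b - a), ?_, by simp, by simp, ?_, ?_⟩
  · exact (continuous_const.add (continuous_id.smul continuous_const)).continuousOn
  · intro t ht
    show a + t • (b - a) ∈ A
    have : a + t • (b - a) = (1 - t) • a + t • b := by
      rw [smul_sub, sub_smul, one_smul]; abel
    rw [this]
    exact hA ha hb (by linarith [ht.1, ht.2]) ht.1 (by ring)
  · rw [one_mul]
    apply evar_le_of_dist_le dist_nonneg
    intro s hs t ht hst
    rw [dist_eq_norm]
    have : a + s • (b - a) - (a + t • (b - a)) = (s - t) • (b - a) := by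
      rw [sub_smul]; abel
    rw [this, norm_smul, Real.norm_eq_abs, abs_of_nonpos (by linarith), dist_eq_norm,
      norm_sub_rev]
    ring_nf
    nlinarith [norm_nonneg (b - a)]

end Path
section Lift

open Set Metric ENNReal

/-- Lifting a path in `T` together with a last coordinate to the band between `ψ₁` and `ψ₂`. -/
lemma lift_path {n : ℕ} {T : Set (Fin n → ℝ)} {ψ₁ ψ₂ : (Fin n → ℝ) → EReal}
    {a b : Fin (n+1) → ℝ} {γ : ℝ → Fin n → ℝ} {lam : ℝ → ℝ}
    (hγc : ContinuousOn γ (Icc 0 1))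
    (hγ0 : γ 0 = a ∘ Fin.castSucc) (hγ1 : γ 1 = b ∘ Fin.castSucc)
    (hγm : ∀ t ∈ Icc (0:ℝ) 1, γ t ∈ T)
    (hlc : ContinuousOn lam (Icc 0 1))
    (hl0 : lam 0 = a (Fin.last n)) (hl1 : lam 1 = b (Fin.last n))
    (hlm : ∀ t ∈ Icc (0:ℝ) 1, ψ₁ (γ t) < ((lam t : ℝ) : EReal) ∧ ((lam t : ℝ) : EReal) < ψ₂ (γ t)) :
    ∃ Γ : ℝ → Fin (n+1) → ℝ,
      ContinuousOn Γ (Icc 0 1) ∧ Γ 0 = a ∧ Γ 1 = b ∧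
      (∀ t ∈ Icc (0:ℝ) 1, Γ t ∈ {x : Fin (n+1) → ℝ | (x ∘ Fin.castSucc) ∈ T ∧
        ψ₁ (x ∘ Fin.castSucc) < ((x (Fin.last n) : ℝ) : EReal) ∧
        ((x (Fin.last n) : ℝ) : EReal) < ψ₂ (x ∘ Fin.castSucc)}) ∧
      eVariationOn Γ (Icc 0 1) ≤ eVariationOn γ (Icc 0 1) + eVariationOn lam (Icc 0 1) := by
  set Γ : ℝ → Fin (n+1) → ℝ := fun t => Fin.snoc (γ t) (lam t) with hΓ
  have hcomp : ∀ t, Γ t ∘ Fin.castSucc = γ t := by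
    intro t; funext j; simp [hΓ, Fin.snoc_castSucc]
  have hlast : ∀ t, Γ t (Fin.last n) = lam t := by
    intro t; simp [hΓ, Fin.snoc_last]
  have hsnoc_ab : ∀ c : Fin (n+1) → ℝ, (Fin.snoc (c ∘ Fin.castSucc) (c (Fin.last n)) : Fin (n+1) → ℝ) = c := by
    intro c; funext i
    refine Fin.lastCases ?_ (fun j => ?_) i
    · simp [Fin.snoc_last]
    · simp [Fin.snoc_castSucc]
  refine ⟨Γ, ?_, ?_, ?_, ?_, ?_⟩
  · apply continuousOn_pi.2
    intro i
    refine Fin.lastCases ?_ (fun j => ?_) i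
    · simpa only [hlast] using hlc
    · have : (fun t => Γ t (Fin.castSucc j)) = fun t => γ t j := by
        funext t; simp [hΓ, Fin.snoc_castSucc]
      rw [this]
      exact (continuous_apply j).comp_continuousOn hγc
  · rw [hΓ]; simp only; rw [hγ0, hl0]; exact hsnoc_ab a
  · rw [hΓ]; simp only; rw [hγ1, hl1]; exact hsnoc_ab b
  · intro t ht
    refine ⟨?_, ?_, ?_⟩
    · rw [hcomp]; exact hγm t ht
    · rw [hcomp, hlast]; exact (hlm t ht).1
    · rw [hcomp, hlast]; exact (hlm t ht).2
  · have := evar_le_comb (f := Γ) (g := γ) (h := lam) (s := Icc 0 1) (c₁ := 1) (c₂ := 1) ?_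
    · simpa using this
    · intro x hx y hy
      rw [one_mul, one_mul]
      have hpi : edist (Γ x) (Γ y) ≤ max (edist (γ x) (γ y)) (edist (lam x) (lam y)) := by
        rw [edist_pi_def]
        apply Finset.sup_le
        intro i _
        refine Fin.lastCases ?_ (fun j => ?_) i
        · rw [hlast, hlast]; exact le_max_right _ _
        · have h1 : edist (Γ x (Fin.castSucc j)) (Γ y (Fin.castSucc j))
              = edist (γ x j) (γ y j) := by simp [hΓ, Fin.snoc_castSucc]
          rw [h1]
          exact le_max_of_le_left (edist_le_pi_edist (γ x) (γ y) j)
      exact hpi.trans (max_le (le_add_of_nonneg_right zero_le)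
        (le_add_of_nonneg_left zero_le))

end Lift
section RVari

open Set Metric ENNReal

lemma evar_real_add_le {f g h : ℝ → ℝ} {s : Set ℝ}
    (H : ∀ x ∈ s, ∀ y ∈ s, |f x - f y| ≤ |g x - g y| + |h x - h y|) :
    eVariationOn f s ≤ eVariationOn g s + eVariationOn h s := by
  have := evar_le_comb (f := f) (g := g) (h := h) (s := s) (c₁ := 1) (c₂ := 1) ?_
  · simpa using this
  · intro x hx y hy
    rw [one_mul, one_mul, edist_dist, edist_dist, edist_dist, Real.dist_eq, Real.dist_eq,
      Real.dist_eq]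
    calc ENNReal.ofReal |f x - f y| ≤ ENNReal.ofReal (|g x - g y| + |h x - h y|) :=
          ENNReal.ofReal_le_ofReal (H x hx y hy)
      _ = ENNReal.ofReal |g x - g y| + ENNReal.ofReal |h x - h y| :=
          ENNReal.ofReal_add (abs_nonneg _) (abs_nonneg _)

lemma evar_real_comb_le {f g h : ℝ → ℝ} {s : Set ℝ} {B : ℝ} (hB : 0 ≤ B)
    (H : ∀ x ∈ s, ∀ y ∈ s, |f x - f y| ≤ B * |g x - g y| + |h x - h y|) :
    eVariationOn f s ≤ ENNReal.ofReal B * eVariationOn g s + eVariationOn h s := by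
  have := evar_le_comb (f := f) (g := g) (h := h) (s := s)
    (c₁ := ENNReal.ofReal B) (c₂ := 1) ?_
  · simpa using this
  · intro x hx y hy
    rw [one_mul, edist_dist, edist_dist, edist_dist, Real.dist_eq, Real.dist_eq, Real.dist_eq]
    calc ENNReal.ofReal |f x - f y|
        ≤ ENNReal.ofReal (B * |g x - g y| + |h x - h y|) :=
          ENNReal.ofReal_le_ofReal (H x hx y hy)
      _ = ENNReal.ofReal (B * |g x - g y|) + ENNReal.ofReal |h x - h y| :=
          ENNReal.ofReal_add (by positivity) (abs_nonneg _)
      _ = ENNReal.ofReal B * ENNReal.ofReal |g x - g y| + ENNReal.ofReal |h x - h y| := by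
          rw [ENNReal.ofReal_mul hB]

lemma evar_linear (c d : ℝ) :
    eVariationOn (fun t => c + t * d) (Icc 0 1) ≤ ENNReal.ofReal |d| := by
  apply evar_le_of_dist_le (abs_nonneg d)
  intro s hs t ht hst
  rw [Real.dist_eq]
  have : c + s * d - (c + t * d) = (s - t) * d := by ring
  rw [this, abs_mul, abs_of_nonpos (by linarith)]
  nlinarith [abs_nonneg d]

lemma evar_comp_lip {n : ℕ} {T : Set (Fin n → ℝ)} {Y : Type*} [PseudoMetricSpace Y]
    {g : (Fin n → ℝ) → Y} {K : ℝ}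
    (hK : 0 ≤ K) (hg : ∀ x ∈ T, ∀ y ∈ T, dist (g x) (g y) ≤ K * dist x y)
    {γ : ℝ → Fin n → ℝ} (hγm : ∀ t ∈ Icc (0:ℝ) 1, γ t ∈ T) {E : ℝ} (hE : 0 ≤ E)
    (hvar : eVariationOn γ (Icc 0 1) ≤ ENNReal.ofReal E) :
    eVariationOn (fun t => g (γ t)) (Icc 0 1) ≤ ENNReal.ofReal (K * E) := by
  have lip : LipschitzOnWith K.toNNReal g T := by
    apply LipschitzOnWith.of_dist_le_mul
    intro x hx y hy
    rw [Real.coe_toNNReal K hK]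
    exact hg x hx y hy
  calc eVariationOn (fun t => g (γ t)) (Icc 0 1)
      = eVariationOn (g ∘ γ) (Icc 0 1) := rfl
    _ ≤ (K.toNNReal : ℝ≥0∞) * eVariationOn γ (Icc 0 1) :=
        lip.comp_eVariationOn_le (fun t ht => hγm t ht)
    _ ≤ (K.toNNReal : ℝ≥0∞) * ENNReal.ofReal E := by gcongr
    _ = ENNReal.ofReal (K * E) := by
        rw [ENNReal.ofReal_mul hK]; rfl

/-- points along a path of small variation remain close to the start. -/
lemma dist_start_le_of_var {X : Type*} [PseudoMetricSpace X] {γ : ℝ → X} {E : ℝ} (hE : 0 ≤ E)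
    (hvar : eVariationOn γ (Icc 0 1) ≤ ENNReal.ofReal E) {t : ℝ} (ht : t ∈ Icc (0:ℝ) 1) :
    dist (γ 0) (γ t) ≤ E := by
  have h0 : (0:ℝ) ∈ Icc (0:ℝ) 1 := ⟨le_refl 0, zero_le_one⟩
  have := (eVariationOn.edist_le γ h0 ht).trans hvar
  rw [edist_dist] at this
  exact (ENNReal.ofReal_le_ofReal_iff hE).1 this

end RVari
section Main

open Set Metric ENNReal

lemma ofReal_add_eq {x y : ℝ} (hx : 0 ≤ x) (hy : 0 ≤ y) :
    ENNReal.ofReal x + ENNReal.ofReal y = ENNReal.ofReal (x + y) :=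
  (ENNReal.ofReal_add hx hy).symm

lemma isOpen_sub_level {n : ℕ} {T : Set (Fin n → ℝ)} (hT : IsOpen T)
    {G : (Fin (n+1) → ℝ) → ℝ}
    (hG : ContinuousOn G ((fun x : Fin (n+1) → ℝ => x ∘ Fin.castSucc) ⁻¹' T)) :
    IsOpen {x : Fin (n+1) → ℝ | (x ∘ Fin.castSucc) ∈ T ∧ 0 < G x} := by
  have hπ : Continuous (fun x : Fin (n+1) → ℝ => x ∘ Fin.castSucc) :=
    continuous_pi fun i => continuous_apply _
  have hT' : IsOpen ((fun x : Fin (n+1) → ℝ => x ∘ Fin.castSucc) ⁻¹' T) := hT.preimage hπ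
  have key := hG.isOpen_inter_preimage hT' (isOpen_Ioi (a := (0:ℝ)))
  have : {x : Fin (n+1) → ℝ | (x ∘ Fin.castSucc) ∈ T ∧ 0 < G x} =
      ((fun x : Fin (n+1) → ℝ => x ∘ Fin.castSucc) ⁻¹' T) ∩ G ⁻¹' (Ioi 0) := by
    ext x; simp [Set.mem_Ioi, Set.mem_preimage]
  rw [this]; exact key

set_option maxHeartbeats 2000000 in
lemma isOpenCell_open_quasi {p : ℕ} (hp : 1 ≤ p) {n : ℕ} {T : Set (Fin n → ℝ)}
    (h : IsOpenCell p n T) : IsOpen T ∧ ∃ M : ℝ, 0 < M ∧ QuasiConvexWith M T := by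
  induction h with
  | base0 => exact ⟨isOpen_univ, 1, one_pos, convex_univ.quasiConvexWith⟩
  | base a b hab =>
    constructor
    · have : {x : Fin 1 → ℝ | a < ((x 0 : ℝ) : EReal) ∧ ((x 0 : ℝ) : EReal) < b} =
          (fun x : Fin 1 → ℝ => ((x 0 : ℝ) : EReal)) ⁻¹' (Set.Ioo a b) := by
        ext x; simp [Set.mem_Ioo]
      rw [this]
      exact isOpen_Ioo.preimage (continuous_coe_real_ereal.comp (continuous_apply 0))
    · refine ⟨1, one_pos, Convex.quasiConvexWith ?_⟩
      intro x hx y hy s t hs ht hst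
      have hs1 : s = 1 - t := by linarith
      subst hs1
      have hxy : ((1 - t) • x + t • y) 0 = (1 - t) * x 0 + t * y 0 := rfl
      have hcomb_lo : min (x 0) (y 0) ≤ (1 - t) * x 0 + t * y 0 := by
        rcases le_total (x 0) (y 0) with hle | hle
        · rw [min_eq_left hle]; nlinarith [mul_nonneg ht (sub_nonneg.2 hle)]
        · rw [min_eq_right hle]; nlinarith [mul_nonneg hs (sub_nonneg.2 hle)]
      have hcomb_hi : (1 - t) * x 0 + t * y 0 ≤ max (x 0) (y 0) := by
        rcases le_total (x 0) (y 0) with hle | hle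
        · rw [max_eq_right hle]; nlinarith [mul_nonneg hs (sub_nonneg.2 hle)]
        · rw [max_eq_left hle]; nlinarith [mul_nonneg ht (sub_nonneg.2 hle)]
      constructor
      · show a < ((((1 - t) • x + t • y) 0 : ℝ) : EReal)
        rw [hxy]
        have h1 : a < ((min (x 0) (y 0) : ℝ) : EReal) := by
          rcases le_total (x 0) (y 0) with hle | hle
          · rw [min_eq_left hle]; exact hx.1
          · rw [min_eq_right hle]; exact hy.1
        exact lt_of_lt_of_le h1 (EReal.coe_le_coe_iff.2 hcomb_lo)
      · show ((((1 - t) • x + t • y) 0 : ℝ) : EReal) < b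
        rw [hxy]
        have h1 : ((max (x 0) (y 0) : ℝ) : EReal) < b := by
          rcases le_total (x 0) (y 0) with hle | hle
          · rw [max_eq_right hle]; exact hy.2
          · rw [max_eq_left hle]; exact hx.2
        exact lt_of_le_of_lt (EReal.coe_le_coe_iff.2 hcomb_hi) h1
  | @step m hm T' ψ₁ ψ₂ hT' h₁ h₂ hlt ih =>
    obtain ⟨hTopen, M, hM, hq⟩ := ih
    have hπ : Continuous (fun x : Fin (m+1) → ℝ => x ∘ Fin.castSucc) :=
      continuous_pi fun i => continuous_apply _
    have hπmap : ∀ x : Fin (m+1) → ℝ,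
        x ∈ ((fun x : Fin (m+1) → ℝ => x ∘ Fin.castSucc) ⁻¹' T') → (x ∘ Fin.castSucc) ∈ T' :=
      fun x hx => hx
    rcases h₁ with hb₁ | ⟨g₁, hreg₁, heq₁⟩ <;> rcases h₂ with hb₂ | ⟨g₂, hreg₂, heq₂⟩
    · -- bot / top
      constructor
      · have heqS : {x : Fin (m+1) → ℝ | (x ∘ Fin.castSucc) ∈ T' ∧
            ψ₁ (x ∘ Fin.castSucc) < ((x (Fin.last m) : ℝ) : EReal) ∧
            ((x (Fin.last m) : ℝ) : EReal) < ψ₂ (x ∘ Fin.castSucc)} =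
            (fun x : Fin (m+1) → ℝ => x ∘ Fin.castSucc) ⁻¹' T' := by
          ext x
          constructor
          · rintro ⟨h, -, -⟩; exact h
          · intro hxT
            exact ⟨hxT, by rw [hb₁ _ hxT]; exact EReal.bot_lt_coe _,
              by rw [hb₂ _ hxT]; exact EReal.coe_lt_top _⟩
        rw [heqS]; exact hTopen.preimage hπ
      · refine ⟨M + 1, by linarith, ?_⟩
        intro a ha b hb
        obtain ⟨haT, ha1, ha2⟩ := ha
        obtain ⟨hbT, hb1', hb2'⟩ := hb
        obtain ⟨γ, hγc, hγ0, hγ1, hγm, hγv⟩ := hq _ haT _ hbT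
        have hD0 : (0:ℝ) ≤ dist a b := dist_nonneg
        have hD' : dist (a ∘ Fin.castSucc) (b ∘ Fin.castSucc) ≤ dist a b := by
          rw [dist_pi_le_iff dist_nonneg]; intro i; exact dist_le_pi_dist a b _
        have hγv' : eVariationOn γ (Icc 0 1) ≤ ENNReal.ofReal (M * dist a b) :=
          hγv.trans (ENNReal.ofReal_le_ofReal (by nlinarith))
        have hlastD : dist (a (Fin.last m)) (b (Fin.last m)) ≤ dist a b :=
          dist_le_pi_dist a b _
        set lam : ℝ → ℝ :=
          fun t => a (Fin.last m) + t * (b (Fin.last m) - a (Fin.last m)) with hlamdef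
        have hlamc : ContinuousOn lam (Icc 0 1) :=
          (continuous_const.add (continuous_id.mul continuous_const)).continuousOn
        have hlam0 : lam 0 = a (Fin.last m) := by simp [hlamdef]
        have hlam1 : lam 1 = b (Fin.last m) := by simp [hlamdef]
        have hlm : ∀ t ∈ Icc (0:ℝ) 1,
            ψ₁ (γ t) < ((lam t : ℝ) : EReal) ∧ ((lam t : ℝ) : EReal) < ψ₂ (γ t) := by
          intro t ht
          rw [hb₁ _ (hγm t ht), hb₂ _ (hγm t ht)]
          exact ⟨EReal.bot_lt_coe _, EReal.coe_lt_top _⟩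
        obtain ⟨Γ, hΓc, hΓ0, hΓ1, hΓm, hΓv⟩ := lift_path hγc hγ0 hγ1 hγm hlamc hlam0 hlam1 hlm
        refine ⟨Γ, hΓc, hΓ0, hΓ1, hΓm, ?_⟩
        have hlamv : eVariationOn lam (Icc 0 1) ≤
            ENNReal.ofReal |b (Fin.last m) - a (Fin.last m)| := evar_linear _ _
        have habs : |b (Fin.last m) - a (Fin.last m)| ≤ dist a b := by
          rw [abs_sub_comm, ← Real.dist_eq]; exact hlastD
        calc eVariationOn Γ (Icc 0 1)
            ≤ eVariationOn γ (Icc 0 1) + eVariationOn lam (Icc 0 1) := hΓv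
          _ ≤ ENNReal.ofReal (M * dist a b) +
              ENNReal.ofReal |b (Fin.last m) - a (Fin.last m)| := add_le_add hγv' hlamv
          _ = ENNReal.ofReal (M * dist a b + |b (Fin.last m) - a (Fin.last m)|) :=
              ofReal_add_eq (mul_nonneg hM.le hD0) (abs_nonneg _)
          _ ≤ ENNReal.ofReal ((M + 1) * dist a b) := by
              apply ENNReal.ofReal_le_ofReal; nlinarith

    · -- bot / g₂
      obtain ⟨K₂, hK₂0, hK₂⟩ := lambda_lipschitz_real hp hTopen hM hq hreg₂
      have hg₂c : ContinuousOn g₂ T' := hreg₂.1.continuousOn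
      constructor
      · have hopen := isOpen_sub_level hTopen
          (G := fun x : Fin (m+1) → ℝ => g₂ (x ∘ Fin.castSucc) - x (Fin.last m))
          ((hg₂c.comp hπ.continuousOn (fun x hx => hx)).sub
            (continuous_apply (Fin.last m)).continuousOn)
        have heqS : {x : Fin (m+1) → ℝ | (x ∘ Fin.castSucc) ∈ T' ∧
            ψ₁ (x ∘ Fin.castSucc) < ((x (Fin.last m) : ℝ) : EReal) ∧
            ((x (Fin.last m) : ℝ) : EReal) < ψ₂ (x ∘ Fin.castSucc)} =
            {x : Fin (m+1) → ℝ | (x ∘ Fin.castSucc) ∈ T' ∧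
              0 < g₂ (x ∘ Fin.castSucc) - x (Fin.last m)} := by
          ext x
          constructor
          · rintro ⟨hxT, -, h2⟩
            rw [heq₂ _ hxT] at h2
            have := EReal.coe_lt_coe_iff.1 h2
            exact ⟨hxT, by linarith⟩
          · rintro ⟨hxT, hG⟩
            exact ⟨hxT, by rw [hb₁ _ hxT]; exact EReal.bot_lt_coe _,
              by rw [heq₂ _ hxT]; exact EReal.coe_lt_coe_iff.2 (by linarith)⟩
        rw [heqS]; exact hopen
      · refine ⟨M + (K₂ * M + K₂ + 1), by nlinarith, ?_⟩
        intro a ha b hb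
        obtain ⟨haT, ha1, ha2⟩ := ha
        obtain ⟨hbT, hb1', hb2'⟩ := hb
        rw [heq₂ _ haT] at ha2
        rw [heq₂ _ hbT] at hb2'
        have ha2' : a (Fin.last m) < g₂ (a ∘ Fin.castSucc) := EReal.coe_lt_coe_iff.1 ha2
        have hb2'' : b (Fin.last m) < g₂ (b ∘ Fin.castSucc) := EReal.coe_lt_coe_iff.1 hb2'
        obtain ⟨γ, hγc, hγ0, hγ1, hγm, hγv⟩ := hq _ haT _ hbT
        have hD0 : (0:ℝ) ≤ dist a b := dist_nonneg
        have hD' : dist (a ∘ Fin.castSucc) (b ∘ Fin.castSucc) ≤ dist a b := by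
          rw [dist_pi_le_iff dist_nonneg]; intro i; exact dist_le_pi_dist a b _
        have hγv' : eVariationOn γ (Icc 0 1) ≤ ENNReal.ofReal (M * dist a b) :=
          hγv.trans (ENNReal.ofReal_le_ofReal (by nlinarith))
        have hlastD : dist (a (Fin.last m)) (b (Fin.last m)) ≤ dist a b :=
          dist_le_pi_dist a b _
        set pp : ℝ := g₂ (a ∘ Fin.castSucc) - a (Fin.last m) with hppdef
        set qq : ℝ := g₂ (b ∘ Fin.castSucc) - b (Fin.last m) with hqqdef
        have hpp : 0 < pp := by rw [hppdef]; linarith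
        have hqq : 0 < qq := by rw [hqqdef]; linarith
        set rho : ℝ → ℝ := fun t => -pp + t * (pp - qq) with hrhodef
        set lam : ℝ → ℝ := fun t => g₂ (γ t) + rho t with hlamdef
        have hlamc : ContinuousOn lam (Icc 0 1) := by
          apply ContinuousOn.add
          · exact hg₂c.comp hγc (fun t ht => hγm t ht)
          · exact (continuous_const.add (continuous_id.mul continuous_const)).continuousOn
        have hlam0 : lam 0 = a (Fin.last m) := by
          simp only [hlamdef, hrhodef, hγ0, hppdef]; ring
        have hlam1 : lam 1 = b (Fin.last m) := by
          simp only [hlamdef, hrhodef, hγ1, hppdef, hqqdef]; ring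
        have hrho_neg : ∀ t ∈ Icc (0:ℝ) 1, rho t < 0 := by
          intro t ht
          obtain ⟨ht0, ht1⟩ := ht
          show -pp + t * (pp - qq) < 0
          rcases eq_or_lt_of_le ht0 with h | h
          · rw [← h]; linarith
          · nlinarith [mul_pos h hqq, mul_nonneg (sub_nonneg.2 ht1) hpp.le]
        have hlm : ∀ t ∈ Icc (0:ℝ) 1,
            ψ₁ (γ t) < ((lam t : ℝ) : EReal) ∧ ((lam t : ℝ) : EReal) < ψ₂ (γ t) := by
          intro t ht
          constructor
          · rw [hb₁ _ (hγm t ht)]; exact EReal.bot_lt_coe _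
          · rw [heq₂ _ (hγm t ht)]
            apply EReal.coe_lt_coe_iff.2
            have := hrho_neg t ht
            simp only [hlamdef]; linarith
        obtain ⟨Γ, hΓc, hΓ0, hΓ1, hΓm, hΓv⟩ := lift_path hγc hγ0 hγ1 hγm hlamc hlam0 hlam1 hlm
        refine ⟨Γ, hΓc, hΓ0, hΓ1, hΓm, ?_⟩
        have hg₂var : eVariationOn (fun t => g₂ (γ t)) (Icc 0 1) ≤
            ENNReal.ofReal (K₂ * (M * dist a b)) :=
          evar_comp_lip hK₂0 hK₂ hγm (mul_nonneg hM.le hD0) hγv'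
        have hrhovar : eVariationOn rho (Icc 0 1) ≤ ENNReal.ofReal |pp - qq| := by
          rw [hrhodef]; exact evar_linear _ _
        have hlamv : eVariationOn lam (Icc 0 1) ≤
            eVariationOn (fun t => g₂ (γ t)) (Icc 0 1) + eVariationOn rho (Icc 0 1) := by
          apply evar_real_add_le
          intro x hx y hy
          have e : lam x - lam y = (g₂ (γ x) - g₂ (γ y)) + (rho x - rho y) := by
            simp only [hlamdef]; ring
          rw [e]; exact abs_add_le _ _
        have hpq : |pp - qq| ≤ K₂ * dist a b + dist a b := by
          have l2 : |g₂ (a ∘ Fin.castSucc) - g₂ (b ∘ Fin.castSucc)| ≤ K₂ * dist a b := by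
            rw [← Real.dist_eq]
            exact (hK₂ _ haT _ hbT).trans (by nlinarith)
          have llast : |a (Fin.last m) - b (Fin.last m)| ≤ dist a b := by
            rw [← Real.dist_eq]; exact hlastD
          have e : pp - qq = (g₂ (a ∘ Fin.castSucc) - g₂ (b ∘ Fin.castSucc)) -
              (a (Fin.last m) - b (Fin.last m)) := by rw [hppdef, hqqdef]; ring
          rw [e]
          calc |_ - _| ≤ |g₂ (a ∘ Fin.castSucc) - g₂ (b ∘ Fin.castSucc)| +
                |a (Fin.last m) - b (Fin.last m)| := abs_sub _ _
            _ ≤ K₂ * dist a b + dist a b := add_le_add l2 llast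
        calc eVariationOn Γ (Icc 0 1)
            ≤ eVariationOn γ (Icc 0 1) + eVariationOn lam (Icc 0 1) := hΓv
          _ ≤ ENNReal.ofReal (M * dist a b) +
              (ENNReal.ofReal (K₂ * (M * dist a b)) + ENNReal.ofReal |pp - qq|) :=
              add_le_add hγv' (hlamv.trans (add_le_add hg₂var hrhovar))
          _ = ENNReal.ofReal (M * dist a b + (K₂ * (M * dist a b) + |pp - qq|)) := by
              rw [ofReal_add_eq (mul_nonneg hK₂0 (mul_nonneg hM.le hD0)) (abs_nonneg _),
                ofReal_add_eq (mul_nonneg hM.le hD0)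
                  (add_nonneg (mul_nonneg hK₂0 (mul_nonneg hM.le hD0)) (abs_nonneg _))]
          _ ≤ ENNReal.ofReal ((M + (K₂ * M + K₂ + 1)) * dist a b) := by
              apply ENNReal.ofReal_le_ofReal; nlinarith [hpq]

    · -- g₁ / top
      obtain ⟨K₁, hK₁0, hK₁⟩ := lambda_lipschitz_real hp hTopen hM hq hreg₁
      have hg₁c : ContinuousOn g₁ T' := hreg₁.1.continuousOn
      constructor
      · have hopen := isOpen_sub_level hTopen
          (G := fun x : Fin (m+1) → ℝ => x (Fin.last m) - g₁ (x ∘ Fin.castSucc))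
          (((continuous_apply (Fin.last m)).continuousOn).sub
            (hg₁c.comp hπ.continuousOn (fun x hx => hx)))
        have heqS : {x : Fin (m+1) → ℝ | (x ∘ Fin.castSucc) ∈ T' ∧
            ψ₁ (x ∘ Fin.castSucc) < ((x (Fin.last m) : ℝ) : EReal) ∧
            ((x (Fin.last m) : ℝ) : EReal) < ψ₂ (x ∘ Fin.castSucc)} =
            {x : Fin (m+1) → ℝ | (x ∘ Fin.castSucc) ∈ T' ∧
              0 < x (Fin.last m) - g₁ (x ∘ Fin.castSucc)} := by
          ext x
          constructor
          · rintro ⟨hxT, h1, -⟩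
            rw [heq₁ _ hxT] at h1
            have := EReal.coe_lt_coe_iff.1 h1
            exact ⟨hxT, by linarith⟩
          · rintro ⟨hxT, hG⟩
            exact ⟨hxT, by rw [heq₁ _ hxT]; exact EReal.coe_lt_coe_iff.2 (by linarith),
              by rw [hb₂ _ hxT]; exact EReal.coe_lt_top _⟩
        rw [heqS]; exact hopen
      · refine ⟨M + (K₁ * M + K₁ + 1), by nlinarith, ?_⟩
        intro a ha b hb
        obtain ⟨haT, ha1, ha2⟩ := ha
        obtain ⟨hbT, hb1', hb2'⟩ := hb
        rw [heq₁ _ haT] at ha1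
        rw [heq₁ _ hbT] at hb1'
        have ha1' : g₁ (a ∘ Fin.castSucc) < a (Fin.last m) := EReal.coe_lt_coe_iff.1 ha1
        have hb1'' : g₁ (b ∘ Fin.castSucc) < b (Fin.last m) := EReal.coe_lt_coe_iff.1 hb1'
        obtain ⟨γ, hγc, hγ0, hγ1, hγm, hγv⟩ := hq _ haT _ hbT
        have hD0 : (0:ℝ) ≤ dist a b := dist_nonneg
        have hD' : dist (a ∘ Fin.castSucc) (b ∘ Fin.castSucc) ≤ dist a b := by
          rw [dist_pi_le_iff dist_nonneg]; intro i; exact dist_le_pi_dist a b _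
        have hγv' : eVariationOn γ (Icc 0 1) ≤ ENNReal.ofReal (M * dist a b) :=
          hγv.trans (ENNReal.ofReal_le_ofReal (by nlinarith))
        have hlastD : dist (a (Fin.last m)) (b (Fin.last m)) ≤ dist a b :=
          dist_le_pi_dist a b _
        set pp : ℝ := a (Fin.last m) - g₁ (a ∘ Fin.castSucc) with hppdef
        set qq : ℝ := b (Fin.last m) - g₁ (b ∘ Fin.castSucc) with hqqdef
        have hpp : 0 < pp := by rw [hppdef]; linarith
        have hqq : 0 < qq := by rw [hqqdef]; linarith
        set rho : ℝ → ℝ := fun t => pp + t * (qq - pp) with hrhodef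
        set lam : ℝ → ℝ := fun t => g₁ (γ t) + rho t with hlamdef
        have hlamc : ContinuousOn lam (Icc 0 1) := by
          apply ContinuousOn.add
          · exact hg₁c.comp hγc (fun t ht => hγm t ht)
          · exact (continuous_const.add (continuous_id.mul continuous_const)).continuousOn
        have hlam0 : lam 0 = a (Fin.last m) := by
          simp only [hlamdef, hrhodef, hγ0, hppdef]; ring
        have hlam1 : lam 1 = b (Fin.last m) := by
          simp only [hlamdef, hrhodef, hγ1, hppdef, hqqdef]; ring
        have hrho_pos : ∀ t ∈ Icc (0:ℝ) 1, 0 < rho t := by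
          intro t ht
          obtain ⟨ht0, ht1⟩ := ht
          show 0 < pp + t * (qq - pp)
          rcases eq_or_lt_of_le ht0 with h | h
          · rw [← h]; linarith
          · nlinarith [mul_pos h hqq, mul_nonneg (sub_nonneg.2 ht1) hpp.le]
        have hlm : ∀ t ∈ Icc (0:ℝ) 1,
            ψ₁ (γ t) < ((lam t : ℝ) : EReal) ∧ ((lam t : ℝ) : EReal) < ψ₂ (γ t) := by
          intro t ht
          constructor
          · rw [heq₁ _ (hγm t ht)]
            apply EReal.coe_lt_coe_iff.2
            have := hrho_pos t ht
            simp only [hlamdef]; linarith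
          · rw [hb₂ _ (hγm t ht)]; exact EReal.coe_lt_top _
        obtain ⟨Γ, hΓc, hΓ0, hΓ1, hΓm, hΓv⟩ := lift_path hγc hγ0 hγ1 hγm hlamc hlam0 hlam1 hlm
        refine ⟨Γ, hΓc, hΓ0, hΓ1, hΓm, ?_⟩
        have hg₁var : eVariationOn (fun t => g₁ (γ t)) (Icc 0 1) ≤
            ENNReal.ofReal (K₁ * (M * dist a b)) :=
          evar_comp_lip hK₁0 hK₁ hγm (mul_nonneg hM.le hD0) hγv'
        have hrhovar : eVariationOn rho (Icc 0 1) ≤ ENNReal.ofReal |qq - pp| := by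
          rw [hrhodef]; exact evar_linear _ _
        have hlamv : eVariationOn lam (Icc 0 1) ≤
            eVariationOn (fun t => g₁ (γ t)) (Icc 0 1) + eVariationOn rho (Icc 0 1) := by
          apply evar_real_add_le
          intro x hx y hy
          have e : lam x - lam y = (g₁ (γ x) - g₁ (γ y)) + (rho x - rho y) := by
            simp only [hlamdef]; ring
          rw [e]; exact abs_add_le _ _
        have hpq : |qq - pp| ≤ K₁ * dist a b + dist a b := by
          have l2 : |g₁ (a ∘ Fin.castSucc) - g₁ (b ∘ Fin.castSucc)| ≤ K₁ * dist a b := by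
            rw [← Real.dist_eq]
            exact (hK₁ _ haT _ hbT).trans (by nlinarith)
          have llast : |a (Fin.last m) - b (Fin.last m)| ≤ dist a b := by
            rw [← Real.dist_eq]; exact hlastD
          have e : qq - pp = (g₁ (a ∘ Fin.castSucc) - g₁ (b ∘ Fin.castSucc)) -
              (a (Fin.last m) - b (Fin.last m)) := by rw [hppdef, hqqdef]; ring
          rw [e]
          calc |_ - _| ≤ |g₁ (a ∘ Fin.castSucc) - g₁ (b ∘ Fin.castSucc)| +
                |a (Fin.last m) - b (Fin.last m)| := abs_sub _ _
            _ ≤ K₁ * dist a b + dist a b := add_le_add l2 llast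
        calc eVariationOn Γ (Icc 0 1)
            ≤ eVariationOn γ (Icc 0 1) + eVariationOn lam (Icc 0 1) := hΓv
          _ ≤ ENNReal.ofReal (M * dist a b) +
              (ENNReal.ofReal (K₁ * (M * dist a b)) + ENNReal.ofReal |qq - pp|) :=
              add_le_add hγv' (hlamv.trans (add_le_add hg₁var hrhovar))
          _ = ENNReal.ofReal (M * dist a b + (K₁ * (M * dist a b) + |qq - pp|)) := by
              rw [ofReal_add_eq (mul_nonneg hK₁0 (mul_nonneg hM.le hD0)) (abs_nonneg _),
                ofReal_add_eq (mul_nonneg hM.le hD0)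
                  (add_nonneg (mul_nonneg hK₁0 (mul_nonneg hM.le hD0)) (abs_nonneg _))]
          _ ≤ ENNReal.ofReal ((M + (K₁ * M + K₁ + 1)) * dist a b) := by
              apply ENNReal.ofReal_le_ofReal; nlinarith [hpq]

    · -- g₁ / g₂
      obtain ⟨K₁, hK₁0, hK₁⟩ := lambda_lipschitz_real hp hTopen hM hq hreg₁
      obtain ⟨K₂, hK₂0, hK₂⟩ := lambda_lipschitz_real hp hTopen hM hq hreg₂
      have hg₁c : ContinuousOn g₁ T' := hreg₁.1.continuousOn
      have hg₂c : ContinuousOn g₂ T' := hreg₂.1.continuousOn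
      constructor
      · have hopen := isOpen_sub_level hTopen
          (G := fun x : Fin (m+1) → ℝ => min (x (Fin.last m) - g₁ (x ∘ Fin.castSucc))
            (g₂ (x ∘ Fin.castSucc) - x (Fin.last m)))
          ((((continuous_apply (Fin.last m)).continuousOn).sub
            (hg₁c.comp hπ.continuousOn (fun x hx => hx))).inf
            ((hg₂c.comp hπ.continuousOn (fun x hx => hx)).sub
              ((continuous_apply (Fin.last m)).continuousOn)))
        have heqS : {x : Fin (m+1) → ℝ | (x ∘ Fin.castSucc) ∈ T' ∧
            ψ₁ (x ∘ Fin.castSucc) < ((x (Fin.last m) : ℝ) : EReal) ∧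
            ((x (Fin.last m) : ℝ) : EReal) < ψ₂ (x ∘ Fin.castSucc)} =
            {x : Fin (m+1) → ℝ | (x ∘ Fin.castSucc) ∈ T' ∧
              0 < min (x (Fin.last m) - g₁ (x ∘ Fin.castSucc))
                (g₂ (x ∘ Fin.castSucc) - x (Fin.last m))} := by
          ext x
          constructor
          · rintro ⟨hxT, h1, h2⟩
            rw [heq₁ _ hxT] at h1
            rw [heq₂ _ hxT] at h2
            have e1 := EReal.coe_lt_coe_iff.1 h1
            have e2 := EReal.coe_lt_coe_iff.1 h2
            exact ⟨hxT, lt_min_iff.2 ⟨by linarith, by linarith⟩⟩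
          · rintro ⟨hxT, hG⟩
            obtain ⟨hG1, hG2⟩ := lt_min_iff.1 hG
            exact ⟨hxT, by rw [heq₁ _ hxT]; exact EReal.coe_lt_coe_iff.2 (by linarith),
              by rw [heq₂ _ hxT]; exact EReal.coe_lt_coe_iff.2 (by linarith)⟩
        rw [heqS]; exact hopen
      · refine ⟨M + 5 * (K₁ + K₂) * M + 3 * (K₁ + K₂) + 2,
          by nlinarith [mul_nonneg (add_nonneg hK₁0 hK₂0) hM.le], ?_⟩
        intro a ha b hb
        obtain ⟨haT, ha1, ha2⟩ := ha
        obtain ⟨hbT, hb1', hb2'⟩ := hb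
        rw [heq₁ _ haT] at ha1
        rw [heq₂ _ haT] at ha2
        rw [heq₁ _ hbT] at hb1'
        rw [heq₂ _ hbT] at hb2'
        have ha1' : g₁ (a ∘ Fin.castSucc) < a (Fin.last m) := EReal.coe_lt_coe_iff.1 ha1
        have ha2' : a (Fin.last m) < g₂ (a ∘ Fin.castSucc) := EReal.coe_lt_coe_iff.1 ha2
        have hb1'' : g₁ (b ∘ Fin.castSucc) < b (Fin.last m) := EReal.coe_lt_coe_iff.1 hb1'
        have hb2'' : b (Fin.last m) < g₂ (b ∘ Fin.castSucc) := EReal.coe_lt_coe_iff.1 hb2'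
        obtain ⟨γ, hγc, hγ0, hγ1, hγm, hγv⟩ := hq _ haT _ hbT
        have hD0 : (0:ℝ) ≤ dist a b := dist_nonneg
        have hD' : dist (a ∘ Fin.castSucc) (b ∘ Fin.castSucc) ≤ dist a b := by
          rw [dist_pi_le_iff dist_nonneg]; intro i; exact dist_le_pi_dist a b _
        have hγv' : eVariationOn γ (Icc 0 1) ≤ ENNReal.ofReal (M * dist a b) :=
          hγv.trans (ENNReal.ofReal_le_ofReal (by nlinarith))
        have hlastD : dist (a (Fin.last m)) (b (Fin.last m)) ≤ dist a b := dist_le_pi_dist a b _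
        have hHa : 0 < g₂ (a ∘ Fin.castSucc) - g₁ (a ∘ Fin.castSucc) := by linarith
        have hHb : 0 < g₂ (b ∘ Fin.castSucc) - g₁ (b ∘ Fin.castSucc) := by linarith
        set θa : ℝ := (a (Fin.last m) - g₁ (a ∘ Fin.castSucc)) / (g₂ (a ∘ Fin.castSucc) - g₁ (a ∘ Fin.castSucc)) with hθadef
        set θb : ℝ := (b (Fin.last m) - g₁ (b ∘ Fin.castSucc)) / (g₂ (b ∘ Fin.castSucc) - g₁ (b ∘ Fin.castSucc)) with hθbdef
        have hθa0 : 0 < θa := div_pos (by linarith) hHa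
        have hθa1 : θa < 1 := (div_lt_one hHa).2 (by linarith)
        have hθb0 : 0 < θb := div_pos (by linarith) hHb
        have hθb1 : θb < 1 := (div_lt_one hHb).2 (by linarith)
        have hθaHa : θa * (g₂ (a ∘ Fin.castSucc) - g₁ (a ∘ Fin.castSucc)) = a (Fin.last m) - g₁ (a ∘ Fin.castSucc) := by
          rw [hθadef]; exact div_mul_cancel₀ _ (ne_of_gt hHa)
        have hθbHb : θb * (g₂ (b ∘ Fin.castSucc) - g₁ (b ∘ Fin.castSucc)) = b (Fin.last m) - g₁ (b ∘ Fin.castSucc) := by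
          rw [hθbdef]; exact div_mul_cancel₀ _ (ne_of_gt hHb)
        set θf : ℝ → ℝ := fun t => θa + t * (θb - θa) with hθfdef
        have hθmem : ∀ t ∈ Icc (0:ℝ) 1, 0 < θf t ∧ θf t < 1 := by
          intro t ht
          obtain ⟨ht0, ht1⟩ := ht
          constructor
          · show 0 < θa + t * (θb - θa)
            rcases eq_or_lt_of_le ht0 with h | h
            · rw [← h]; linarith
            · nlinarith [mul_pos h hθb0, mul_nonneg (sub_nonneg.2 ht1) hθa0.le]
          · show θa + t * (θb - θa) < 1
            rcases eq_or_lt_of_le ht0 with h | h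
            · rw [← h]; linarith
            · nlinarith [mul_pos h (sub_pos.2 hθb1),
                mul_nonneg (sub_nonneg.2 ht1) (sub_pos.2 hθa1).le]
        have hhfpos : ∀ t ∈ Icc (0:ℝ) 1, 0 < g₂ (γ t) - g₁ (γ t) := by
          intro t ht
          have h3 := hlt (γ t) (hγm t ht)
          rw [heq₁ _ (hγm t ht), heq₂ _ (hγm t ht)] at h3
          have := EReal.coe_lt_coe_iff.1 h3
          linarith
        have hγdist : ∀ t ∈ Icc (0:ℝ) 1, dist (a ∘ Fin.castSucc) (γ t) ≤ M * dist a b := by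
          intro t ht
          have := dist_start_le_of_var (mul_nonneg hM.le hD0) hγv' ht
          rwa [hγ0] at this
        have hB0 : (0:ℝ) ≤ (g₂ (a ∘ Fin.castSucc) - g₁ (a ∘ Fin.castSucc)) + (K₁ + K₂) * (M * dist a b) := by
          nlinarith [mul_nonneg (add_nonneg hK₁0 hK₂0) (mul_nonneg hM.le hD0)]
        have hhfB : ∀ t ∈ Icc (0:ℝ) 1, g₂ (γ t) - g₁ (γ t) ≤
            (g₂ (a ∘ Fin.castSucc) - g₁ (a ∘ Fin.castSucc)) + (K₁ + K₂) * (M * dist a b) := by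
          intro t ht
          have hd := hγdist t ht
          have l1 : dist (g₁ (a ∘ Fin.castSucc)) (g₁ (γ t)) ≤ K₁ * (M * dist a b) :=
            (hK₁ _ haT _ (hγm t ht)).trans (by nlinarith)
          have l2 : dist (g₂ (a ∘ Fin.castSucc)) (g₂ (γ t)) ≤ K₂ * (M * dist a b) :=
            (hK₂ _ haT _ (hγm t ht)).trans (by nlinarith)
          rw [Real.dist_eq] at l1 l2
          have a1 := abs_le.1 l1
          have a2 := abs_le.1 l2
          nlinarith [a1.1, a1.2, a2.1, a2.2]
        set lam : ℝ → ℝ := fun t => g₁ (γ t) + θf t * (g₂ (γ t) - g₁ (γ t)) with hlamdef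
        have hlamc : ContinuousOn lam (Icc 0 1) := by
          apply ContinuousOn.add
          · exact hg₁c.comp hγc (fun t ht => hγm t ht)
          · apply ContinuousOn.mul
            · exact (continuous_const.add (continuous_id.mul continuous_const)).continuousOn
            · exact (hg₂c.comp hγc (fun t ht => hγm t ht)).sub
                (hg₁c.comp hγc (fun t ht => hγm t ht))
        have hlam0 : lam 0 = a (Fin.last m) := by
          show g₁ (γ 0) + (θa + 0 * (θb - θa)) * (g₂ (γ 0) - g₁ (γ 0)) = a (Fin.last m)
          rw [hγ0]
          have : (θa + 0 * (θb - θa)) = θa := by ring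
          rw [this, hθaHa]; ring
        have hlam1 : lam 1 = b (Fin.last m) := by
          show g₁ (γ 1) + (θa + 1 * (θb - θa)) * (g₂ (γ 1) - g₁ (γ 1)) = b (Fin.last m)
          rw [hγ1]
          have : (θa + 1 * (θb - θa)) = θb := by ring
          rw [this, hθbHb]; ring
        have hlm : ∀ t ∈ Icc (0:ℝ) 1,
            ψ₁ (γ t) < ((lam t : ℝ) : EReal) ∧ ((lam t : ℝ) : EReal) < ψ₂ (γ t) := by
          intro t ht
          obtain ⟨hθt0, hθt1⟩ := hθmem t ht
          have hpos := hhfpos t ht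
          constructor
          · rw [heq₁ _ (hγm t ht)]
            apply EReal.coe_lt_coe_iff.2
            show g₁ (γ t) < g₁ (γ t) + θf t * (g₂ (γ t) - g₁ (γ t))
            nlinarith [mul_pos hθt0 hpos]
          · rw [heq₂ _ (hγm t ht)]
            apply EReal.coe_lt_coe_iff.2
            show g₁ (γ t) + θf t * (g₂ (γ t) - g₁ (γ t)) < g₂ (γ t)
            nlinarith [mul_pos (sub_pos.2 hθt1) hpos]
        obtain ⟨Γ, hΓc, hΓ0, hΓ1, hΓm, hΓv⟩ := lift_path hγc hγ0 hγ1 hγm hlamc hlam0 hlam1 hlm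
        refine ⟨Γ, hΓc, hΓ0, hΓ1, hΓm, ?_⟩
        have hg₁var : eVariationOn (fun t => g₁ (γ t)) (Icc 0 1) ≤
            ENNReal.ofReal (K₁ * (M * dist a b)) :=
          evar_comp_lip hK₁0 hK₁ hγm (mul_nonneg hM.le hD0) hγv'
        have hg₂var : eVariationOn (fun t => g₂ (γ t)) (Icc 0 1) ≤
            ENNReal.ofReal (K₂ * (M * dist a b)) :=
          evar_comp_lip hK₂0 hK₂ hγm (mul_nonneg hM.le hD0) hγv'
        have hθvar : eVariationOn θf (Icc 0 1) ≤ ENNReal.ofReal |θb - θa| := by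
          rw [hθfdef]; exact evar_linear _ _
        have hhfvar : eVariationOn (fun t => g₂ (γ t) - g₁ (γ t)) (Icc 0 1) ≤
            ENNReal.ofReal (K₂ * (M * dist a b)) + ENNReal.ofReal (K₁ * (M * dist a b)) := by
          refine (evar_real_add_le (g := fun t => g₂ (γ t)) (h := fun t => g₁ (γ t)) ?_).trans
            (add_le_add hg₂var hg₁var)
          intro x hx y hy
          have e : (g₂ (γ x) - g₁ (γ x)) - (g₂ (γ y) - g₁ (γ y)) =
              (g₂ (γ x) - g₂ (γ y)) - (g₁ (γ x) - g₁ (γ y)) := by ring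
          rw [e]; exact abs_sub _ _
        have hνvar : eVariationOn (fun t => θf t * (g₂ (γ t) - g₁ (γ t))) (Icc 0 1) ≤
            ENNReal.ofReal ((g₂ (a ∘ Fin.castSucc) - g₁ (a ∘ Fin.castSucc)) + (K₁ + K₂) * (M * dist a b)) *
              eVariationOn θf (Icc 0 1) +
            eVariationOn (fun t => g₂ (γ t) - g₁ (γ t)) (Icc 0 1) := by
          apply evar_real_comb_le hB0
          intro x hx y hy
          obtain ⟨hθx0, hθx1⟩ := hθmem x hx
          obtain ⟨hθy0, hθy1⟩ := hθmem y hy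
          have hfx := hhfpos x hx
          have hfy := hhfpos y hy
          have hfxB := hhfB x hx
          have e : θf x * (g₂ (γ x) - g₁ (γ x)) - θf y * (g₂ (γ y) - g₁ (γ y)) =
              θf y * ((g₂ (γ x) - g₁ (γ x)) - (g₂ (γ y) - g₁ (γ y))) +
              (g₂ (γ x) - g₁ (γ x)) * (θf x - θf y) := by ring
          rw [e]
          calc |θf y * ((g₂ (γ x) - g₁ (γ x)) - (g₂ (γ y) - g₁ (γ y))) +
                (g₂ (γ x) - g₁ (γ x)) * (θf x - θf y)|
              ≤ |θf y * ((g₂ (γ x) - g₁ (γ x)) - (g₂ (γ y) - g₁ (γ y)))| +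
                |(g₂ (γ x) - g₁ (γ x)) * (θf x - θf y)| := abs_add_le _ _
            _ = |θf y| * |(g₂ (γ x) - g₁ (γ x)) - (g₂ (γ y) - g₁ (γ y))| +
                |g₂ (γ x) - g₁ (γ x)| * |θf x - θf y| := by rw [abs_mul, abs_mul]
            _ ≤ 1 * |(g₂ (γ x) - g₁ (γ x)) - (g₂ (γ y) - g₁ (γ y))| +
                ((g₂ (a ∘ Fin.castSucc) - g₁ (a ∘ Fin.castSucc)) + (K₁ + K₂) * (M * dist a b)) * |θf x - θf y| := by
                apply add_le_add
                · apply mul_le_mul_of_nonneg_right _ (abs_nonneg _)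
                  rw [abs_of_pos hθy0]; exact hθy1.le
                · apply mul_le_mul_of_nonneg_right _ (abs_nonneg _)
                  rw [abs_of_pos hfx]; exact hfxB
            _ = ((g₂ (a ∘ Fin.castSucc) - g₁ (a ∘ Fin.castSucc)) + (K₁ + K₂) * (M * dist a b)) * |θf x - θf y| +
                |(g₂ (γ x) - g₁ (γ x)) - (g₂ (γ y) - g₁ (γ y))| := by ring
        have hlamv : eVariationOn lam (Icc 0 1) ≤
            eVariationOn (fun t => g₁ (γ t)) (Icc 0 1) +
            eVariationOn (fun t => θf t * (g₂ (γ t) - g₁ (γ t))) (Icc 0 1) := by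
          apply evar_real_add_le
          intro x hx y hy
          have e : lam x - lam y = (g₁ (γ x) - g₁ (γ y)) +
              (θf x * (g₂ (γ x) - g₁ (γ x)) - θf y * (g₂ (γ y) - g₁ (γ y))) := by
            simp only [hlamdef]; ring
          rw [e]; exact abs_add_le _ _
        -- real-number bound on the `θ` product term
        have hθab2 : |θb - θa| ≤ 2 := by
          rw [abs_le]; constructor <;> linarith
        have hl1 : |g₁ (a ∘ Fin.castSucc) - g₁ (b ∘ Fin.castSucc)| ≤ K₁ * dist a b := by
          rw [← Real.dist_eq]; exact (hK₁ _ haT _ hbT).trans (by nlinarith)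
        have hl2 : |g₂ (a ∘ Fin.castSucc) - g₂ (b ∘ Fin.castSucc)| ≤ K₂ * dist a b := by
          rw [← Real.dist_eq]; exact (hK₂ _ haT _ hbT).trans (by nlinarith)
        have hllast : |a (Fin.last m) - b (Fin.last m)| ≤ dist a b := by
          rw [← Real.dist_eq]; exact hlastD
        have hHaθ : (g₂ (a ∘ Fin.castSucc) - g₁ (a ∘ Fin.castSucc)) * |θb - θa| ≤
            (K₁ + K₂) * dist a b + (dist a b + K₁ * dist a b) := by
          have hid : (g₂ (a ∘ Fin.castSucc) - g₁ (a ∘ Fin.castSucc)) * θb - (g₂ (a ∘ Fin.castSucc) - g₁ (a ∘ Fin.castSucc)) * θa =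
              ((g₂ (a ∘ Fin.castSucc) - g₁ (a ∘ Fin.castSucc)) - (g₂ (b ∘ Fin.castSucc) - g₁ (b ∘ Fin.castSucc))) * θb +
              ((b (Fin.last m) - g₁ (b ∘ Fin.castSucc)) - (a (Fin.last m) - g₁ (a ∘ Fin.castSucc))) := by
            rw [← hθaHa, ← hθbHb]; ring
          have step1 : (g₂ (a ∘ Fin.castSucc) - g₁ (a ∘ Fin.castSucc)) * |θb - θa| =
              |(g₂ (a ∘ Fin.castSucc) - g₁ (a ∘ Fin.castSucc)) * θb - (g₂ (a ∘ Fin.castSucc) - g₁ (a ∘ Fin.castSucc)) * θa| := by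
            rw [← mul_sub, abs_mul, abs_of_pos hHa]
          rw [step1, hid]
          have habs1 : |((g₂ (a ∘ Fin.castSucc) - g₁ (a ∘ Fin.castSucc)) - (g₂ (b ∘ Fin.castSucc) - g₁ (b ∘ Fin.castSucc))) * θb| ≤
              (K₁ + K₂) * dist a b := by
            rw [abs_mul]
            have h1 : |(g₂ (a ∘ Fin.castSucc) - g₁ (a ∘ Fin.castSucc)) - (g₂ (b ∘ Fin.castSucc) - g₁ (b ∘ Fin.castSucc))| ≤
                (K₁ + K₂) * dist a b := by
              have e : (g₂ (a ∘ Fin.castSucc) - g₁ (a ∘ Fin.castSucc)) - (g₂ (b ∘ Fin.castSucc) - g₁ (b ∘ Fin.castSucc)) =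
                  (g₂ (a ∘ Fin.castSucc) - g₂ (b ∘ Fin.castSucc)) - (g₁ (a ∘ Fin.castSucc) - g₁ (b ∘ Fin.castSucc)) := by ring
              rw [e]
              calc |(g₂ (a ∘ Fin.castSucc) - g₂ (b ∘ Fin.castSucc)) - (g₁ (a ∘ Fin.castSucc) - g₁ (b ∘ Fin.castSucc))|
                  ≤ |g₂ (a ∘ Fin.castSucc) - g₂ (b ∘ Fin.castSucc)| + |g₁ (a ∘ Fin.castSucc) - g₁ (b ∘ Fin.castSucc)| := abs_sub _ _
                _ ≤ K₂ * dist a b + K₁ * dist a b := add_le_add hl2 hl1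
                _ = (K₁ + K₂) * dist a b := by ring
            have h2 : |θb| ≤ 1 := by rw [abs_of_pos hθb0]; exact hθb1.le
            calc |(g₂ (a ∘ Fin.castSucc) - g₁ (a ∘ Fin.castSucc)) - (g₂ (b ∘ Fin.castSucc) - g₁ (b ∘ Fin.castSucc))| * |θb|
                ≤ ((K₁ + K₂) * dist a b) * 1 :=
                  mul_le_mul h1 h2 (abs_nonneg _)
                    (by nlinarith [mul_nonneg (add_nonneg hK₁0 hK₂0) hD0])
              _ = (K₁ + K₂) * dist a b := by ring
          have habs2 : |(b (Fin.last m) - g₁ (b ∘ Fin.castSucc)) - (a (Fin.last m) - g₁ (a ∘ Fin.castSucc))| ≤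
              dist a b + K₁ * dist a b := by
            have e : (b (Fin.last m) - g₁ (b ∘ Fin.castSucc)) - (a (Fin.last m) - g₁ (a ∘ Fin.castSucc)) =
                (g₁ (a ∘ Fin.castSucc) - g₁ (b ∘ Fin.castSucc)) - (a (Fin.last m) - b (Fin.last m)) := by ring
            rw [e]
            calc |(g₁ (a ∘ Fin.castSucc) - g₁ (b ∘ Fin.castSucc)) - (a (Fin.last m) - b (Fin.last m))|
                ≤ |g₁ (a ∘ Fin.castSucc) - g₁ (b ∘ Fin.castSucc)| + |a (Fin.last m) - b (Fin.last m)| := abs_sub _ _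
              _ ≤ K₁ * dist a b + dist a b := add_le_add hl1 hllast
              _ = dist a b + K₁ * dist a b := by ring
          calc |((g₂ (a ∘ Fin.castSucc) - g₁ (a ∘ Fin.castSucc)) - (g₂ (b ∘ Fin.castSucc) - g₁ (b ∘ Fin.castSucc))) * θb +
                ((b (Fin.last m) - g₁ (b ∘ Fin.castSucc)) - (a (Fin.last m) - g₁ (a ∘ Fin.castSucc)))|
              ≤ |((g₂ (a ∘ Fin.castSucc) - g₁ (a ∘ Fin.castSucc)) - (g₂ (b ∘ Fin.castSucc) - g₁ (b ∘ Fin.castSucc))) * θb| +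
                |(b (Fin.last m) - g₁ (b ∘ Fin.castSucc)) - (a (Fin.last m) - g₁ (a ∘ Fin.castSucc))| := abs_add_le _ _
            _ ≤ (K₁ + K₂) * dist a b + (dist a b + K₁ * dist a b) := add_le_add habs1 habs2
        have hBθ : ((g₂ (a ∘ Fin.castSucc) - g₁ (a ∘ Fin.castSucc)) + (K₁ + K₂) * (M * dist a b)) * |θb - θa| ≤
            (K₁ + K₂) * dist a b + (dist a b + K₁ * dist a b) +
            2 * ((K₁ + K₂) * (M * dist a b)) := by
          have h1 : (K₁ + K₂) * (M * dist a b) * |θb - θa| ≤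
              2 * ((K₁ + K₂) * (M * dist a b)) := by
            nlinarith [mul_nonneg (add_nonneg hK₁0 hK₂0) (mul_nonneg hM.le hD0), hθab2,
              abs_nonneg (θb - θa)]
          nlinarith [hHaθ, h1]
        -- assemble
        have hνR : eVariationOn (fun t => θf t * (g₂ (γ t) - g₁ (γ t))) (Icc 0 1) ≤
            ENNReal.ofReal ((((g₂ (a ∘ Fin.castSucc) - g₁ (a ∘ Fin.castSucc)) + (K₁ + K₂) * (M * dist a b)) * |θb - θa|) +
              (K₂ * (M * dist a b) + K₁ * (M * dist a b))) := by
          refine hνvar.trans ?_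
          have h1 : ENNReal.ofReal ((g₂ (a ∘ Fin.castSucc) - g₁ (a ∘ Fin.castSucc)) + (K₁ + K₂) * (M * dist a b)) *
              eVariationOn θf (Icc 0 1) ≤
              ENNReal.ofReal (((g₂ (a ∘ Fin.castSucc) - g₁ (a ∘ Fin.castSucc)) + (K₁ + K₂) * (M * dist a b)) * |θb - θa|) := by
            rw [ENNReal.ofReal_mul hB0]
            exact mul_le_mul_right hθvar _
          have h2 := hhfvar.trans (le_of_eq (ofReal_add_eq
            (mul_nonneg hK₂0 (mul_nonneg hM.le hD0)) (mul_nonneg hK₁0 (mul_nonneg hM.le hD0))))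
          refine (add_le_add h1 h2).trans (le_of_eq ?_)
          exact ofReal_add_eq (mul_nonneg hB0 (abs_nonneg _))
            (add_nonneg (mul_nonneg hK₂0 (mul_nonneg hM.le hD0))
              (mul_nonneg hK₁0 (mul_nonneg hM.le hD0)))
        have hlamR : eVariationOn lam (Icc 0 1) ≤
            ENNReal.ofReal (K₁ * (M * dist a b) +
              ((((g₂ (a ∘ Fin.castSucc) - g₁ (a ∘ Fin.castSucc)) + (K₁ + K₂) * (M * dist a b)) * |θb - θa|) +
                (K₂ * (M * dist a b) + K₁ * (M * dist a b)))) := by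
          refine hlamv.trans ?_
          refine (add_le_add hg₁var hνR).trans (le_of_eq ?_)
          exact ofReal_add_eq (mul_nonneg hK₁0 (mul_nonneg hM.le hD0))
            (add_nonneg (mul_nonneg hB0 (abs_nonneg _))
              (add_nonneg (mul_nonneg hK₂0 (mul_nonneg hM.le hD0))
                (mul_nonneg hK₁0 (mul_nonneg hM.le hD0))))
        calc eVariationOn Γ (Icc 0 1)
            ≤ eVariationOn γ (Icc 0 1) + eVariationOn lam (Icc 0 1) := hΓv
          _ ≤ ENNReal.ofReal (M * dist a b) +
              ENNReal.ofReal (K₁ * (M * dist a b) +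
                ((((g₂ (a ∘ Fin.castSucc) - g₁ (a ∘ Fin.castSucc)) + (K₁ + K₂) * (M * dist a b)) * |θb - θa|) +
                  (K₂ * (M * dist a b) + K₁ * (M * dist a b)))) := add_le_add hγv' hlamR
          _ = ENNReal.ofReal (M * dist a b + (K₁ * (M * dist a b) +
                ((((g₂ (a ∘ Fin.castSucc) - g₁ (a ∘ Fin.castSucc)) + (K₁ + K₂) * (M * dist a b)) * |θb - θa|) +
                  (K₂ * (M * dist a b) + K₁ * (M * dist a b))))) :=
              ofReal_add_eq (mul_nonneg hM.le hD0)
                (add_nonneg (mul_nonneg hK₁0 (mul_nonneg hM.le hD0))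
                  (add_nonneg (mul_nonneg hB0 (abs_nonneg _))
                    (add_nonneg (mul_nonneg hK₂0 (mul_nonneg hM.le hD0))
                      (mul_nonneg hK₁0 (mul_nonneg hM.le hD0)))))
          _ ≤ ENNReal.ofReal ((M + 5 * (K₁ + K₂) * M + 3 * (K₁ + K₂) + 2) * dist a b) := by
              apply ENNReal.ofReal_le_ofReal
              nlinarith [hBθ, mul_nonneg (mul_nonneg (add_nonneg hK₁0 hK₂0) hM.le) hD0,
                mul_nonneg hK₁0 hD0, mul_nonneg hK₂0 hD0,
                mul_nonneg (add_nonneg hK₁0 hK₂0) hD0]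


end Main
section Final

open Set Metric ENNReal

set_option maxHeartbeats 1000000 in
theorem cell_quasiConvex_and_lipschitz' (p : ℕ) (hp : 1 ≤ p) :
    (∀ n m : ℕ, ∀ S : Set (Fin n → ℝ), IsCell p n m S →
      ∃ M > 0, QuasiConvexWith M S) ∧
    (∀ m j : ℕ, ∀ T : Set (Fin m → ℝ), ∀ g : (Fin m → ℝ) → (Fin j → ℝ),
      IsOpenCell p m T → LambdaRegular p T g → ∃ K : ℝ≥0, LipschitzOnWith K g T) ∧
    (∀ m : ℕ, ∀ T : Set (Fin m → ℝ), ∀ g : (Fin m → ℝ) → ℝ,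
      IsOpenCell p m T → LambdaRegular p T g → ∃ K : ℝ≥0, LipschitzOnWith K g T) := by
  refine ⟨?_, ?_, ?_⟩
  · -- quasi-convexity of cells
    intro n m S hcell
    rcases hcell with ⟨rfl, hopen⟩ | ⟨hmn, T, φ, hT, hφ, rfl⟩
    · obtain ⟨-, M, hM, hq⟩ := isOpenCell_open_quasi hp hopen
      exact ⟨M, hM, hq⟩
    · obtain ⟨hTopen, M, hM, hq⟩ := isOpenCell_open_quasi hp hT
      obtain ⟨Kr, hKr0, hKr⟩ := lambda_lipschitz_real hp hTopen hM hq hφ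
      refine ⟨M + Kr * M + 1, by nlinarith, ?_⟩
      intro a ha b hb
      obtain ⟨haT, haφ⟩ := ha
      obtain ⟨hbT, hbφ⟩ := hb
      obtain ⟨γ, hγc, hγ0, hγ1, hγm, hγv⟩ := hq _ haT _ hbT
      have hD0 : (0:ℝ) ≤ dist a b := dist_nonneg
      have hD' : dist (fun i : Fin m => a (Fin.castLE hmn.le i))
          (fun i : Fin m => b (Fin.castLE hmn.le i)) ≤ dist a b := by
        rw [dist_pi_le_iff dist_nonneg]; intro i; exact dist_le_pi_dist a b _
      have hγv' : eVariationOn γ (Icc 0 1) ≤ ENNReal.ofReal (M * dist a b) :=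
        hγv.trans (ENNReal.ofReal_le_ofReal (by nlinarith))
      set Γ : ℝ → Fin n → ℝ := fun t i =>
        if h : i.1 < m then γ t ⟨i.1, h⟩
        else φ (γ t) ⟨i.1 - m, by have := i.isLt; omega⟩ with hΓdef
      have hπΓ : ∀ t, (fun i : Fin m => Γ t (Fin.castLE hmn.le i)) = γ t := by
        intro t; funext i
        show (if h : (Fin.castLE hmn.le i).1 < m then γ t ⟨(Fin.castLE hmn.le i).1, h⟩
          else _) = γ t i
        rw [dif_pos (show (Fin.castLE hmn.le i).1 < m from i.isLt)]
        exact congrArg (γ t) (Fin.ext rfl)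
      have hΓcoord : ∀ t (j : Fin (n - m)),
          Γ t ⟨m + j.1, by have := j.isLt; omega⟩ = φ (γ t) j := by
        intro t j
        show (if h : m + j.1 < m then _ else φ (γ t) ⟨m + j.1 - m, _⟩) = φ (γ t) j
        rw [dif_neg (by omega)]
        refine congrArg (φ (γ t)) (Fin.ext ?_)
        show m + j.1 - m = j.1
        omega
      have hend : ∀ (c : Fin n → ℝ), (fun i : Fin m => c (Fin.castLE hmn.le i)) ∈ T →
          (∀ j : Fin (n - m), c ⟨m + j.1, by have := j.isLt; omega⟩ =
            φ (fun i : Fin m => c (Fin.castLE hmn.le i)) j) →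
          ∀ t, γ t = (fun i : Fin m => c (Fin.castLE hmn.le i)) → Γ t = c := by
        intro c hcT hcφ t hγt
        funext i
        by_cases h : i.1 < m
        · show (if h : i.1 < m then γ t ⟨i.1, h⟩ else _) = c i
          rw [dif_pos h, hγt]
          exact congrArg c (Fin.ext rfl)
        · show (if h : i.1 < m then γ t ⟨i.1, h⟩
            else φ (γ t) ⟨i.1 - m, by have := i.isLt; omega⟩) = c i
          rw [dif_neg h, hγt]
          have := hcφ ⟨i.1 - m, by have := i.isLt; omega⟩
          rw [← this]
          exact (congrArg c (Fin.ext (by simp; omega))).symm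
      have hΓ0 : Γ 0 = a := hend a haT haφ 0 hγ0
      have hΓ1 : Γ 1 = b := hend b hbT hbφ 1 hγ1
      have hφc : ContinuousOn φ T := hφ.1.continuousOn
      refine ⟨Γ, ?_, hΓ0, hΓ1, ?_, ?_⟩
      · apply continuousOn_pi.2
        intro i
        by_cases h : i.1 < m
        · have : (fun t => Γ t i) = fun t => γ t ⟨i.1, h⟩ := by
            funext t
            show (if h : i.1 < m then γ t ⟨i.1, h⟩ else _) = _
            rw [dif_pos h]
          rw [this]
          exact (continuous_apply _).comp_continuousOn hγc
        · have : (fun t => Γ t i) =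
              fun t => φ (γ t) ⟨i.1 - m, by have := i.isLt; omega⟩ := by
            funext t
            show (if h : i.1 < m then γ t ⟨i.1, h⟩ else _) = _
            rw [dif_neg h]
          rw [this]
          exact (continuous_apply _).comp_continuousOn
            (hφc.comp hγc (fun t ht => hγm t ht))
      · intro t ht
        refine ⟨?_, ?_⟩
        · rw [hπΓ t]; exact hγm t ht
        · intro j
          rw [hΓcoord t j, hπΓ t]
      · have hcomb := evar_le_comb (f := Γ) (g := γ) (h := fun t => φ (γ t))
          (s := Icc 0 1) (c₁ := 1) (c₂ := 1) ?_
        · have hφvar : eVariationOn (fun t => φ (γ t)) (Icc 0 1) ≤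
              ENNReal.ofReal (Kr * (M * dist a b)) :=
            evar_comp_lip hKr0 hKr hγm (mul_nonneg hM.le hD0) hγv'
          rw [one_mul, one_mul] at hcomb
          calc eVariationOn Γ (Icc 0 1)
              ≤ eVariationOn γ (Icc 0 1) + eVariationOn (fun t => φ (γ t)) (Icc 0 1) := hcomb
            _ ≤ ENNReal.ofReal (M * dist a b) + ENNReal.ofReal (Kr * (M * dist a b)) :=
                add_le_add hγv' hφvar
            _ = ENNReal.ofReal (M * dist a b + Kr * (M * dist a b)) :=
                ofReal_add_eq (mul_nonneg hM.le hD0)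
                  (mul_nonneg hKr0 (mul_nonneg hM.le hD0))
            _ ≤ ENNReal.ofReal ((M + Kr * M + 1) * dist a b) := by
                apply ENNReal.ofReal_le_ofReal; nlinarith
        · intro x hx y hy
          rw [one_mul, one_mul, edist_pi_def]
          apply Finset.sup_le
          intro i _
          by_cases h : i.1 < m
          · have e : ∀ t, Γ t i = γ t ⟨i.1, h⟩ := by
              intro t
              show (if h : i.1 < m then γ t ⟨i.1, h⟩ else _) = _
              rw [dif_pos h]
            rw [e x, e y]
            exact le_trans (edist_le_pi_edist (γ x) (γ y) _)
              (le_add_of_nonneg_right zero_le)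
          · have e : ∀ t, Γ t i = φ (γ t) ⟨i.1 - m, by have := i.isLt; omega⟩ := by
              intro t
              show (if h : i.1 < m then γ t ⟨i.1, h⟩ else _) = _
              rw [dif_neg h]
            rw [e x, e y]
            exact le_trans (edist_le_pi_edist (φ (γ x)) (φ (γ y)) _)
              (le_add_of_nonneg_left zero_le)
  · -- Lipschitz, vector-valued
    intro m j T g hT hg
    obtain ⟨hTopen, M, hM, hq⟩ := isOpenCell_open_quasi hp hT
    exact lambda_lipschitzOnWith hp hTopen hM hq hg
  · -- Lipschitz, scalar
    intro m T g hT hg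
    obtain ⟨hTopen, M, hM, hq⟩ := isOpenCell_open_quasi hp hT
    exact lambda_lipschitzOnWith hp hTopen hM hq hg

end Final
/-- **Remark 2.5.** Every `Λ_p`-regular cell in `ℝⁿ` is quasi-convex; moreover every
`Λ_p`-regular map on an open `Λ_p`-regular cell (in particular each finite `ψᵢ` from the
definition of an open cell, and the map `φ` from the definition of a lower-dimensional
cell) is Lipschitz. -/
theorem cell_quasiConvex_and_lipschitz (p : ℕ) (hp : 1 ≤ p) :
    (∀ n m : ℕ, ∀ S : Set (Fin n → ℝ), IsCell p n m S →
      ∃ M > 0, QuasiConvexWith M S) ∧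
    (∀ m j : ℕ, ∀ T : Set (Fin m → ℝ), ∀ g : (Fin m → ℝ) → (Fin j → ℝ),
      IsOpenCell p m T → LambdaRegular p T g → ∃ K : ℝ≥0, LipschitzOnWith K g T) ∧
    (∀ m : ℕ, ∀ T : Set (Fin m → ℝ), ∀ g : (Fin m → ℝ) → ℝ,
      IsOpenCell p m T → LambdaRegular p T g → ∃ K : ℝ≥0, LipschitzOnWith K g T) := by
  exact cell_quasiConvex_and_lipschitz' p hp
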